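/- Let Δ and γ be real numbers with 0 < Δ < 1 and 0 < γ < 1, let w ≥ 1 and k ≥ 1 be natural numbers, and suppose Δ < γ^(w-1). Let s : ℕ → ℝ satisfy 0 ≤ s t ≤ Δ^k for every t, and let r : ℕ → ℝ satisfy 0 ≤ r t ≤ 1 for every t and r t ≥ Δ^(k-1) for every t ≥ w - 1. Then ∑'_{t=0}^∞ γ^t · s t < ∑'_{t=0}^∞ γ^t · r t. -/

import Mathlib

/-! Both returns are compared with geometric series: the dominated return is at most
`Δ ^ k / (1 - γ)`, while the discarded first `w - 1` steps of the other trajectory cost at most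
a factor `γ ^ (w - 1)`, so its return is at least `γ ^ (w - 1) * Δ ^ (k - 1) / (1 - γ)`, and
`Δ ^ k = Δ * Δ ^ (k - 1) < γ ^ (w - 1) * Δ ^ (k - 1)`. -/

section DiscountedReturn

variable {γ : ℝ} (hγ0 : 0 ≤ γ) (hγ1 : γ < 1) {f : ℕ → ℝ}
include hγ0 hγ1

theorem summable_pow_mul_of_nonneg_of_le {C : ℝ} (hf0 : ∀ t, 0 ≤ f t) (hfC : ∀ t, f t ≤ C) :
    Summable fun t => γ ^ t * f t :=
  (summable_geometric_of_lt_one hγ0 hγ1).mul_right C |>.of_nonneg_of_le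
    (fun t => mul_nonneg (pow_nonneg hγ0 t) (hf0 t))
    (fun t => mul_le_mul_of_nonneg_left (hfC t) (pow_nonneg hγ0 t))

theorem tsum_pow_mul_le_of_le {C : ℝ} (hf : Summable fun t => γ ^ t * f t)
    (hfC : ∀ t, f t ≤ C) :
    ∑' t, γ ^ t * f t ≤ C / (1 - γ) :=
  calc ∑' t, γ ^ t * f t ≤ ∑' t, γ ^ t * C :=
        hf.tsum_le_tsum (fun t => mul_le_mul_of_nonneg_left (hfC t) (pow_nonneg hγ0 t))
          ((summable_geometric_of_lt_one hγ0 hγ1).mul_right C)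
    _ = C / (1 - γ) := by
        rw [tsum_mul_right, tsum_geometric_of_lt_one hγ0 hγ1, div_eq_inv_mul]

theorem le_tsum_pow_mul_of_le {a : ℝ} {m : ℕ} (hf0 : ∀ t, 0 ≤ f t)
    (hf : Summable fun t => γ ^ t * f t) (hfa : ∀ t, m ≤ t → a ≤ f t) :
    γ ^ m * a / (1 - γ) ≤ ∑' t, γ ^ t * f t := by
  have htail : γ ^ m * a / (1 - γ) ≤ ∑' n, γ ^ (n + m) * f (n + m) :=
    calc γ ^ m * a / (1 - γ) = ∑' n, γ ^ (n + m) * a := by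
          simp_rw [pow_add, mul_assoc]
          rw [tsum_mul_right, tsum_geometric_of_lt_one hγ0 hγ1, div_eq_inv_mul]
      _ ≤ ∑' n, γ ^ (n + m) * f (n + m) :=
          ((summable_geometric_of_lt_one hγ0 hγ1).comp_injective
              (add_left_injective m) |>.mul_right a).tsum_le_tsum
            (fun n => mul_le_mul_of_nonneg_left (hfa _ (Nat.le_add_left m n))
              (pow_nonneg hγ0 _))
            ((summable_nat_add_iff m).mpr hf)
  have hhead : 0 ≤ ∑ t ∈ Finset.range m, γ ^ t * f t :=
    Finset.sum_nonneg fun t _ => mul_nonneg (pow_nonneg hγ0 t) (hf0 t)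
  rw [← hf.sum_add_tsum_nat_add m]
  linarith

end DiscountedReturn

theorem stepwise_trajectory_dominates_general
    (Δ γ : ℝ) (hΔ0 : 0 < Δ) (hγ0 : 0 < γ) (hγ1 : γ < 1)
    (w k : ℕ) (hk : 1 ≤ k)
    (hfav : Δ < γ ^ (w - 1))
    (s : ℕ → ℝ) (hs : ∀ t, 0 ≤ s t ∧ s t ≤ Δ ^ k)
    (r : ℕ → ℝ) (hr : ∀ t, 0 ≤ r t ∧ r t ≤ 1)
    (hr1 : ∀ t, w - 1 ≤ t → Δ ^ (k - 1) ≤ r t) :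
    (∑' t : ℕ, γ ^ t * s t) < ∑' t : ℕ, γ ^ t * r t := by
  have hstep : Δ ^ k < γ ^ (w - 1) * Δ ^ (k - 1) := by
    rw [← Nat.sub_add_cancel hk, pow_succ', Nat.add_sub_cancel]
    exact mul_lt_mul_of_pos_right hfav (pow_pos hΔ0 _)
  calc ∑' t, γ ^ t * s t ≤ Δ ^ k / (1 - γ) :=
        tsum_pow_mul_le_of_le hγ0.le hγ1
          (summable_pow_mul_of_nonneg_of_le hγ0.le hγ1 (fun t => (hs t).1) (fun t => (hs t).2))
          (fun t => (hs t).2)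
    _ < γ ^ (w - 1) * Δ ^ (k - 1) / (1 - γ) := div_lt_div_of_pos_right hstep (by linarith)
    _ ≤ ∑' t, γ ^ t * r t :=
        le_tsum_pow_mul_of_le hγ0.le hγ1 (fun t => (hr t).1)
          (summable_pow_mul_of_nonneg_of_le hγ0.le hγ1 (fun t => (hr t).1) (fun t => (hr t).2))
          hr1

/-- Trajectory-level content of the corollary to Theorem 3: under
`Δ < γ ^ (w - 1)`, a trajectory that advances to the next step by time `w - 1`
and thereafter collects reward at least `Δ ^ (k-1)` strictly dominates any
trajectory whose reward never exceeds `Δ ^ k`. -/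
theorem stepwise_trajectory_dominates
    (Δ γ : ℝ) (hΔ0 : 0 < Δ) (hΔ1 : Δ < 1) (hγ0 : 0 < γ) (hγ1 : γ < 1)
    (w k : ℕ) (hw : 1 ≤ w) (hk : 1 ≤ k)
    (hfav : Δ < γ ^ (w - 1))
    (s : ℕ → ℝ) (hs : ∀ t, 0 ≤ s t ∧ s t ≤ Δ ^ k)
    (r : ℕ → ℝ) (hr : ∀ t, 0 ≤ r t ∧ r t ≤ 1)
    (hr1 : ∀ t, w - 1 ≤ t → Δ ^ (k - 1) ≤ r t) :
    (∑' t : ℕ, γ ^ t * s t) < ∑' t : ℕ, γ ^ t * r t :=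
  stepwise_trajectory_dominates_general Δ γ hΔ0 hγ0 hγ1 w k hk hfav s hs r hr hr1
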